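/- Let Ω be the square annulus. Then the L¹TV energy of the empty set equals E_λ(∅) = λ(4δL + 8δr + 4δ²); equivalently, the area of the square annulus is vol(Ω) = 4δL + 8δr + 4δ². -/

import Mathlib

/-!
The closed `r`-neighbourhood of a rectangle `[a, b] × [c, d]` consists of the points whose
distances `d₁, d₂` to the two side intervals satisfy `d₁² + d₂² ≤ r²`. Its vertical slice over `x`
is an interval of length `(d - c) + 2√(r² - d₁(x)²)`. Over `[a, b]` this is `(d - c) + 2r`, and the
two collars `[a - r, a]`, `[b, b + r]` glue, after translation, to `[-r, r]` with `d₁ = |t|`, so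
integrating gives `(b - a)(d - c) + 2r((b - a) + (d - c)) + πr²`. Since `A_in ⊆ A_out`, `vol Ω` is
the difference of two such values, in which `πr²` cancels; and `E_λ(∅) = λ vol Ω` because `∅` has
empty frontier.
-/

open Metric MeasureTheory Set Real
open scoped ENNReal

/-- The L¹TV energy: one-dimensional Hausdorff measure of the topological boundary
(perimeter for the piecewise-smooth sets considered) plus `λ` times the Lebesgue
volume of the symmetric difference with the data set `Ω`. -/
noncomputable def L1TV (lam : ℝ) (S Ω : Set (EuclideanSpace ℝ (Fin 2))) : ℝ≥0∞ :=
  μH[1] (frontier S) + ENNReal.ofReal lam * volume (symmDiff S Ω)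

lemma Real.infDist_Icc {a b : ℝ} (hab : a ≤ b) (x : ℝ) :
    infDist x (Icc a b) = max (a - x) (max (x - b) 0) := by
  refine le_antisymm ?_ ((le_infDist (nonempty_Icc.2 hab)).2 fun y hy => ?_)
  · calc infDist x (Icc a b) ≤ dist x (max a (min b x)) :=
          infDist_le_dist_of_mem ⟨le_max_left _ _, max_le hab (min_le_left _ _)⟩
      _ = max (a - x) (max (x - b) 0) := by
        rw [Real.dist_eq]
        rcases le_total x a with h | h <;> rcases le_total x b with h' | h' <;>
          simp [abs_of_nonneg, abs_of_nonpos, *] <;> grind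
  · rw [Real.dist_eq]
    exact max_le (by grind [neg_abs_le]) (max_le (by grind [le_abs_self]) (abs_nonneg _))

lemma Real.infDist_Icc_le_iff {a b t : ℝ} (hab : a ≤ b) (ht : 0 ≤ t) (x : ℝ) :
    infDist x (Icc a b) ≤ t ↔ x ∈ Icc (a - t) (b + t) := by
  rw [Real.infDist_Icc hab, max_le_iff, max_le_iff, mem_Icc]
  constructor
  · rintro ⟨h₁, h₂, -⟩; constructor <;> linarith
  · rintro ⟨h₁, h₂⟩; exact ⟨by linarith, by linarith, ht⟩

lemma integral_sqrt_sq_sub_sq {r : ℝ} (hr : 0 ≤ r) :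
    ∫ x in (-r)..r, √(r ^ 2 - x ^ 2) = π * r ^ 2 / 2 := by
  have hscale (y : ℝ) : √(r ^ 2 - (r * y) ^ 2) = r * √(1 - y ^ 2) := by
    rw [show r ^ 2 - (r * y) ^ 2 = r ^ 2 * (1 - y ^ 2) by ring, Real.sqrt_mul (by positivity),
      Real.sqrt_sq hr]
  have hsubst := intervalIntegral.smul_integral_comp_mul_left (a := -1) (b := 1)
    (fun x => √(r ^ 2 - x ^ 2)) r
  simp only [hscale, intervalIntegral.integral_const_mul, integral_sqrt_one_sub_sq,
    mul_neg_one, mul_one, smul_eq_mul] at hsubst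
  rw [← hsubst]
  ring

lemma volume_euclideanSpace_fin_two_setOf_mem {U : Set (ℝ × ℝ)} (hU : MeasurableSet U) :
    volume {p : EuclideanSpace ℝ (Fin 2) | (p 0, p 1) ∈ U} = volume U :=
  ((volume_preserving_finTwoArrow ℝ).comp (PiLp.volume_preserving_ofLp (Fin 2))).measure_preimage
    hU.nullMeasurableSet

lemma infDist_setOf_coord_mem {A B : Set ℝ} (hA : IsClosed A) (hA' : A.Nonempty)
    (hB : IsClosed B) (hB' : B.Nonempty) (p : EuclideanSpace ℝ (Fin 2)) :
    infDist p {q : EuclideanSpace ℝ (Fin 2) | q 0 ∈ A ∧ q 1 ∈ B}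
      = √(infDist (p 0) A ^ 2 + infDist (p 1) B ^ 2) := by
  obtain ⟨x, hx, hpx⟩ := hA.exists_infDist_eq_dist hA' (p 0)
  obtain ⟨y, hy, hpy⟩ := hB.exists_infDist_eq_dist hB' (p 1)
  have hxy : !₂[x, y] ∈ {q : EuclideanSpace ℝ (Fin 2) | q 0 ∈ A ∧ q 1 ∈ B} := ⟨hx, hy⟩
  refine le_antisymm ?_ ((le_infDist ⟨_, hxy⟩).2 fun z ⟨hz₀, hz₁⟩ => ?_)
  · calc infDist p _ ≤ dist p !₂[x, y] := infDist_le_dist_of_mem hxy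
      _ = _ := by rw [EuclideanSpace.dist_eq, Fin.sum_univ_two, hpx, hpy]; rfl
  · rw [EuclideanSpace.dist_eq, Fin.sum_univ_two]
    gcongr <;> first | exact infDist_nonneg | exact infDist_le_dist_of_mem ‹_›

lemma mem_cthickening_setOf_coord_mem_iff {A B : Set ℝ} (hA : IsClosed A) (hA' : A.Nonempty)
    (hB : IsClosed B) (hB' : B.Nonempty) {r : ℝ} (hr : 0 ≤ r) (p : EuclideanSpace ℝ (Fin 2)) :
    p ∈ cthickening r {q : EuclideanSpace ℝ (Fin 2) | q 0 ∈ A ∧ q 1 ∈ B}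
      ↔ infDist (p 0) A ^ 2 + infDist (p 1) B ^ 2 ≤ r ^ 2 := by
  have hne : {q : EuclideanSpace ℝ (Fin 2) | q 0 ∈ A ∧ q 1 ∈ B}.Nonempty := by
    obtain ⟨x, hx⟩ := hA'; obtain ⟨y, hy⟩ := hB'
    exact ⟨!₂[x, y], hx, hy⟩
  rw [mem_cthickening_iff, ← ENNReal.ofReal_toReal (infEDist_ne_top hne),
    ENNReal.ofReal_le_ofReal_iff hr]
  change infDist _ _ ≤ r ↔ _
  rw [infDist_setOf_coord_mem hA hA' hB hB', sqrt_le_left hr]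

lemma setOf_infDist_Icc_sq_le {c d t : ℝ} (hcd : c ≤ d) (ht : 0 ≤ t) :
    {y | infDist y (Icc c d) ^ 2 ≤ t ^ 2} = Icc (c - t) (d + t) := by
  ext y
  rw [mem_ofPred_eq, sq_le_sq₀ infDist_nonneg ht, Real.infDist_Icc_le_iff hcd ht]

lemma volume_setOf_sq_add_infDist_Icc_sq_le {c d r s : ℝ} (hcd : c ≤ d) (hs : 0 ≤ s)
    (hsr : s ≤ r) :
    volume {y | s ^ 2 + infDist y (Icc c d) ^ 2 ≤ r ^ 2}
      = ENNReal.ofReal (d - c + 2 * √(r ^ 2 - s ^ 2)) := by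
  have ht : √(r ^ 2 - s ^ 2) ^ 2 = r ^ 2 - s ^ 2 := sq_sqrt (by nlinarith)
  have hslice : {y | s ^ 2 + infDist y (Icc c d) ^ 2 ≤ r ^ 2}
      = {y | infDist y (Icc c d) ^ 2 ≤ √(r ^ 2 - s ^ 2) ^ 2} := by
    ext y
    rw [mem_ofPred_eq, mem_ofPred_eq, ht]
    constructor <;> intro <;> linarith
  rw [hslice, setOf_infDist_Icc_sq_le hcd (sqrt_nonneg _), Real.volume_Icc]
  ring_nf

open intervalIntegral in
lemma integral_comp_infDist_Icc {a b r : ℝ} (hab : a ≤ b) (hr : 0 ≤ r) {F : ℝ → ℝ}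
    (hF : Continuous F) :
    ∫ x in (a - r)..(b + r), F (infDist x (Icc a b)) = (b - a) * F 0 + ∫ t in (-r)..r, F |t| := by
  have hG : Continuous fun x => F (infDist x (Icc a b)) := hF.comp (continuous_infDist_pt _)
  have hleft : ∫ x in (a - r)..a, F (infDist x (Icc a b)) = ∫ t in (-r)..0, F |t| := by
    have hshift := integral_comp_add_left (fun x => F (infDist x (Icc a b))) a (a := -r) (b := 0)
    rw [add_zero, ← sub_eq_add_neg] at hshift
    rw [← hshift]
    refine integral_congr fun t ht => congrArg F ?_
    obtain ⟨ht₁, ht₂⟩ : -r ≤ t ∧ t ≤ 0 := by rwa [uIcc_of_le (by linarith)] at ht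
    rw [Real.infDist_Icc hab, abs_of_nonpos ht₂, max_eq_left (max_le (by linarith) (by linarith))]
    ring
  have hmid : ∫ x in a..b, F (infDist x (Icc a b)) = (b - a) * F 0 := by
    rw [integral_congr fun x hx => by rw [infDist_zero_of_mem (uIcc_of_le hab ▸ hx)],
      intervalIntegral.integral_const, smul_eq_mul]
  have hright : ∫ x in b..(b + r), F (infDist x (Icc a b)) = ∫ t in (0 : ℝ)..r, F |t| := by
    have hshift := integral_comp_add_left (fun x => F (infDist x (Icc a b))) b (a := 0) (b := r)
    rw [add_zero] at hshift
    rw [← hshift]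
    refine integral_congr fun t ht => congrArg F ?_
    obtain ⟨ht₁, ht₂⟩ : 0 ≤ t ∧ t ≤ r := by rwa [uIcc_of_le hr] at ht
    rw [Real.infDist_Icc hab, abs_of_nonneg ht₁, add_sub_cancel_left, max_eq_left ht₁,
      max_eq_right (by linarith)]
  have hF' : Continuous fun t => F |t| := hF.comp continuous_abs
  rw [← integral_add_adjacent_intervals (hG.intervalIntegrable _ a) (hG.intervalIntegrable _ _),
    ← integral_add_adjacent_intervals (hG.intervalIntegrable a b) (hG.intervalIntegrable _ _),
    hleft, hmid, hright, ← integral_add_adjacent_intervals (hF'.intervalIntegrable (-r) 0)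
      (hF'.intervalIntegrable 0 r)]
  ring

lemma volume_cthickening_rectangle {a b c d r : ℝ} (hab : a ≤ b) (hcd : c ≤ d) (hr : 0 ≤ r) :
    volume (cthickening r {q : EuclideanSpace ℝ (Fin 2) | q 0 ∈ Icc a b ∧ q 1 ∈ Icc c d})
      = ENNReal.ofReal ((b - a) * (d - c) + 2 * r * (b - a + (d - c)) + π * r ^ 2) := by
  set U : Set (ℝ × ℝ) := {z | infDist z.1 (Icc a b) ^ 2 + infDist z.2 (Icc c d) ^ 2 ≤ r ^ 2}
  have hU : MeasurableSet U :=
    (isClosed_le (by fun_prop) continuous_const).measurableSet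
  have hset : cthickening r {q : EuclideanSpace ℝ (Fin 2) | q 0 ∈ Icc a b ∧ q 1 ∈ Icc c d}
      = {p | (p 0, p 1) ∈ U} :=
    ext <| mem_cthickening_setOf_coord_mem_iff isClosed_Icc (nonempty_Icc.2 hab) isClosed_Icc
      (nonempty_Icc.2 hcd) hr
  set F : ℝ → ℝ := fun s => d - c + 2 * √(r ^ 2 - s ^ 2)
  have hslice (x : ℝ) : volume (Prod.mk x ⁻¹' U)
      = (Icc (a - r) (b + r)).indicator (fun x => ENNReal.ofReal (F (infDist x (Icc a b)))) x := by
    by_cases hx : x ∈ Icc (a - r) (b + r)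
    · rw [indicator_of_mem hx]
      exact volume_setOf_sq_add_infDist_Icc_sq_le hcd infDist_nonneg
        ((Real.infDist_Icc_le_iff hab hr x).2 hx)
    · have hempty : Prod.mk x ⁻¹' U = ∅ := eq_empty_of_forall_notMem fun y hy =>
        hx <| (Real.infDist_Icc_le_iff hab hr x).1 <|
          (pow_le_pow_iff_left₀ infDist_nonneg hr two_ne_zero).1
            (le_of_add_le_of_nonneg_left hy (sq_nonneg _))
      rw [indicator_of_notMem hx, hempty, measure_empty]
  rw [hset, volume_euclideanSpace_fin_two_setOf_mem hU, Measure.volume_eq_prod,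
    Measure.prod_apply hU, lintegral_congr hslice, lintegral_indicator measurableSet_Icc,
    ← ofReal_integral_eq_lintegral_ofReal ((by fun_prop : Continuous _).integrableOn_Icc)
      (ae_of_all _ fun x => by positivity),
    integral_Icc_eq_integral_Ioc, ← intervalIntegral.integral_of_le (by linarith),
    integral_comp_infDist_Icc hab hr (by fun_prop)]
  simp only [F, sq_abs, zero_pow two_ne_zero, sub_zero, sqrt_sq hr]
  rw [intervalIntegral.integral_add intervalIntegrable_const
      (Continuous.intervalIntegrable (by fun_prop) _ _), intervalIntegral.integral_const,
    intervalIntegral.integral_const_mul, integral_sqrt_sq_sub_sq hr]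
  congr 1
  ring

theorem stmt_11_general (L r δ lam : ℝ) (hL : 0 < L) (hr : 0 < r) (hδ : 0 < δ)
    (Kin Kout Ain Aout Ω : Set (EuclideanSpace ℝ (Fin 2)))
    (hKin : Kin = {p | p 0 ∈ Icc (0 : ℝ) L ∧ p 1 ∈ Icc (0 : ℝ) L})
    (hKout : Kout = {p | p 0 ∈ Icc (-δ) (L + δ) ∧ p 1 ∈ Icc (-δ) (L + δ)})
    (hAin : Ain = cthickening r Kin) (hAout : Aout = cthickening r Kout)
    (hΩ : Ω = Aout \ Ain) :
    L1TV lam ∅ Ω = ENNReal.ofReal (lam * (4 * δ * L + 8 * δ * r + 4 * δ ^ 2)) ∧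
    volume Ω = ENNReal.ofReal (4 * δ * L + 8 * δ * r + 4 * δ ^ 2) := by
  have hvol_in := volume_cthickening_rectangle (r := r) hL.le hL.le hr.le
  have hvol_out := volume_cthickening_rectangle (r := r) (by linarith : -δ ≤ L + δ)
    (by linarith : -δ ≤ L + δ) hr.le
  rw [← hKin, ← hAin] at hvol_in
  rw [← hKout, ← hAout] at hvol_out
  have hsub : Ain ⊆ Aout := by
    rw [hAin, hAout, hKin, hKout]
    refine cthickening_subset_of_subset r fun p ⟨⟨h₀, h₀'⟩, h₁, h₁'⟩ => ⟨⟨?_, ?_⟩, ?_, ?_⟩ <;>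
      linarith
  have hvol : volume Ω = ENNReal.ofReal (4 * δ * L + 8 * δ * r + 4 * δ ^ 2) := by
    rw [hΩ, measure_sdiff hsub (hAin ▸ isClosed_cthickening.nullMeasurableSet)
      (hvol_in ▸ ENNReal.ofReal_ne_top), hvol_in, hvol_out, ← ENNReal.ofReal_sub _ (by positivity)]
    congr 1
    ring
  refine ⟨?_, hvol⟩
  rw [L1TV, frontier_empty, measure_empty, zero_add, ← bot_eq_empty, bot_symmDiff, hvol,
    ENNReal.ofReal_mul' (by positivity)]

theorem stmt_11 (L r δ lam : ℝ) (hL : 0 < L) (hr : 0 < r) (hδ : 0 < δ) (hlam : 0 < lam)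
    (Kin Kout Ain Aout Ω : Set (EuclideanSpace ℝ (Fin 2)))
    (hKin : Kin = {p | p 0 ∈ Icc (0 : ℝ) L ∧ p 1 ∈ Icc (0 : ℝ) L})
    (hKout : Kout = {p | p 0 ∈ Icc (-δ) (L + δ) ∧ p 1 ∈ Icc (-δ) (L + δ)})
    (hAin : Ain = cthickening r Kin) (hAout : Aout = cthickening r Kout)
    (hΩ : Ω = Aout \ Ain) :
    L1TV lam ∅ Ω = ENNReal.ofReal (lam * (4 * δ * L + 8 * δ * r + 4 * δ ^ 2)) ∧
    volume Ω = ENNReal.ofReal (4 * δ * L + 8 * δ * r + 4 * δ ^ 2) :=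
  stmt_11_general L r δ lam hL hr hδ Kin Kout Ain Aout Ω hKin hKout hAin hAout hΩ
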